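/- arXiv:2303.05610 — 5 statements merged into one kernel-verified Lean document; each statement's English description precedes it below -/
import Mathlib

section
/- Let V be a finite-dimensional vector space over a field and N : V → V a nilpotent linear endomorphism. Then there exists a unique finite increasing filtration (Fil_j)_{j ∈ ℤ} of V by subspaces such that Fil_j = 0 for j sufficiently small, Fil_j = V for j sufficiently large, N(Fil_j) ⊆ Fil_{j-2} for all j, and for every k ≥ 0 the map induced by N^k from the graded piece gr_k = Fil_k/Fil_{k-1} to gr_{-k} = Fil_{-k}/Fil_{-k-1} is an isomorphism. -/
/-!
Induction on the nilpotency order, carried out for the monodromy filtration of `N` on an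
`N`-stable subquotient `W / U`. If `N ^ (n + 2)` kills `W / U`, such a filtration is `U` below
`-n - 1` and `W` above `n`, while `Fil n = W ⊓ (N ^ (n + 1))⁻¹ U` and
`Fil (-n - 1) = U + N ^ (n + 1) W` are forced by the isomorphism conditions in degree
`n + 1`. Between these two steps it is a monodromy filtration of the smaller subquotient
`Fil n / Fil (-n - 1)`, on which `N ^ (n + 1)` vanishes; this gives uniqueness, and conversely
any monodromy filtration of that subquotient extends by `U` and `W` to one of `W / U`.
-/

open Submodule

section

variable {R V : Type*} [Ring R] [AddCommGroup V] [Module R V]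

theorem Submodule.map_pow_le_of_map_le {N : Module.End R V} {U : Submodule R V}
    (hU : U.map N ≤ U) (k : ℕ) : U.map (N ^ k) ≤ U := by
  induction k with
  | zero => rw [pow_zero, Module.End.one_eq_id, map_id]
  | succ k ih =>
    rw [pow_succ, Module.End.mul_eq_comp, map_comp]
    exact (map_mono hU).trans ih

section SubquotientStep

variable {N : Module.End R V} {U W : Submodule R V} {n : ℕ}

theorem Submodule.map_sup_map_pow_le (hU : U.map N ≤ U) (hn : W.map (N ^ (n + 2)) ≤ U) :
    (U ⊔ W.map (N ^ (n + 1))).map N ≤ U := by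
  rw [Submodule.map_sup, ← map_comp, ← Module.End.mul_eq_comp, ← pow_succ']
  exact sup_le hU hn

theorem Submodule.map_le_inf_comap_pow (hW : W.map N ≤ W) (hn : W.map (N ^ (n + 2)) ≤ U) :
    W.map N ≤ W ⊓ U.comap (N ^ (n + 1)) := by
  refine le_inf hW (map_le_iff_le_comap.mp ?_)
  rwa [← map_comp, ← Module.End.mul_eq_comp, ← pow_succ]

theorem Submodule.map_pow_inf_comap_pow_le :
    (W ⊓ U.comap (N ^ (n + 1))).map (N ^ (n + 1)) ≤ U ⊔ W.map (N ^ (n + 1)) :=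
  (map_mono inf_le_right).trans ((map_comap_le _ _).trans le_sup_left)

theorem Submodule.sup_map_pow_le_inf_comap_pow (hU : U.map N ≤ U) (hW : W.map N ≤ W)
    (hUW : U ≤ W) (hn : W.map (N ^ (n + 2)) ≤ U) :
    U ⊔ W.map (N ^ (n + 1)) ≤ W ⊓ U.comap (N ^ (n + 1)) := by
  refine sup_le (le_inf hUW (map_le_iff_le_comap.mp (map_pow_le_of_map_le hU _)))
    (le_inf (map_pow_le_of_map_le hW _) (map_le_iff_le_comap.mp ?_))
  rw [← map_comp, ← Module.End.mul_eq_comp, ← pow_add,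
    show n + 1 + (n + 1) = n + (n + 2) by ring, pow_add, Module.End.mul_eq_comp, map_comp]
  exact (map_mono hn).trans (map_pow_le_of_map_le hU n)

end SubquotientStep

/-- A monodromy filtration of `N` on the subquotient `W / U`, recorded as a filtration of `W`
by submodules containing `U`. -/
structure IsMonodromyFiltration (N : Module.End R V) (U W : Submodule R V)
    (Fil : ℤ → Submodule R V) : Prop where
  monotone : Monotone Fil
  exists_eq_lower : ∃ a : ℤ, ∀ j ≤ a, Fil j = U
  exists_eq_upper : ∃ b : ℤ, ∀ j : ℤ, b ≤ j → Fil j = W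
  map_mem : ∀ j : ℤ, ∀ x ∈ Fil j, N x ∈ Fil (j - 2)
  exists_pow_sub_mem : ∀ k : ℕ, ∀ x ∈ Fil (-(k : ℤ)), ∃ y ∈ Fil (k : ℤ),
    (N ^ k) y - x ∈ Fil (-(k : ℤ) - 1)
  mem_of_pow_mem : ∀ k : ℕ, ∀ y ∈ Fil (k : ℤ),
    (N ^ k) y ∈ Fil (-(k : ℤ) - 1) → y ∈ Fil ((k : ℤ) - 1)

namespace IsMonodromyFiltration

variable {N : Module.End R V} {U W : Submodule R V} {Fil : ℤ → Submodule R V}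

theorem le_apply (h : IsMonodromyFiltration N U W Fil) (j : ℤ) : U ≤ Fil j := by
  obtain ⟨a, ha⟩ := h.exists_eq_lower
  rcases le_total j a with hj | hj
  · rw [ha j hj]
  · exact ha a le_rfl ▸ h.monotone hj

theorem apply_le (h : IsMonodromyFiltration N U W Fil) (j : ℤ) : Fil j ≤ W := by
  obtain ⟨b, hb⟩ := h.exists_eq_upper
  rcases le_total j b with hj | hj
  · exact hb b le_rfl ▸ h.monotone hj
  · rw [hb j hj]

theorem pow_mem (h : IsMonodromyFiltration N U W Fil) (k : ℕ) {j : ℤ} {x : V}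
    (hx : x ∈ Fil j) : (N ^ k) x ∈ Fil (j - 2 * k) := by
  induction k generalizing j x with
  | zero => simpa using hx
  | succ k ih =>
    rw [pow_succ, Module.End.mul_apply]
    convert ih (h.map_mem j x hx) using 2
    push_cast
    ring

theorem pow_mem_neg (h : IsMonodromyFiltration N U W Fil) (k : ℕ) {y : V}
    (hy : y ∈ Fil k) : (N ^ k) y ∈ Fil (-k) := by
  convert h.pow_mem k hy using 2
  ring

theorem map_lower_le (h : IsMonodromyFiltration N U W Fil) : U.map N ≤ U := by
  obtain ⟨a, ha⟩ := h.exists_eq_lower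
  rintro _ ⟨x, hx, rfl⟩
  rw [← ha a le_rfl] at hx
  exact ha (a - 2) (by omega) ▸ h.map_mem a x hx

theorem map_upper_le (h : IsMonodromyFiltration N U W Fil) : W.map N ≤ W := by
  obtain ⟨b, hb⟩ := h.exists_eq_upper
  rintro _ ⟨x, hx, rfl⟩
  rw [← hb b le_rfl] at hx
  exact h.apply_le _ (h.map_mem b x hx)

theorem mem_of_pow_mem_lower (h : IsMonodromyFiltration N U W Fil) (k : ℕ) {x : V}
    (hxW : x ∈ W) (hx : (N ^ k) x ∈ U) : x ∈ Fil (k - 1) := by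
  obtain ⟨b, hb⟩ := h.exists_eq_upper
  suffices ∀ i : ℕ, x ∈ Fil (k - 1 + i) → x ∈ Fil (k - 1) from
    this (b - k + 1).toNat (by rw [hb _ (by omega)]; exact hxW)
  intro i
  induction i with
  | zero => simp
  | succ i ih =>
    intro hxi
    have hNx : (N ^ (k + i)) x ∈ U := by
      rw [add_comm, pow_add, Module.End.mul_apply]
      exact map_pow_le_of_map_le h.map_lower_le i (mem_map_of_mem hx)
    apply ih
    convert h.mem_of_pow_mem (k + i) x (by convert hxi using 2; push_cast; ring)
      (h.le_apply _ hNx) using 2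
    push_cast
    ring

theorem apply_neg_le_sup_map_pow (h : IsMonodromyFiltration N U W Fil) (k : ℕ) :
    Fil (-k) ≤ U ⊔ W.map (N ^ k) := by
  obtain ⟨a, ha⟩ := h.exists_eq_lower
  suffices ∀ i k : ℕ, Fil (-k) ≤ Fil (-k - i) ⊔ W.map (N ^ k) by
    have := this (-a).toNat k
    rwa [ha (-k - (-a).toNat) (by omega)] at this
  intro i
  induction i with
  | zero => simp
  | succ i ih =>
    intro k
    have hstep : Fil (-k) ≤ Fil (-k - 1) ⊔ W.map (N ^ k) := by
      intro x hx
      obtain ⟨y, hy, hr⟩ := h.exists_pow_sub_mem k x hx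
      rw [← sub_sub_cancel ((N ^ k) y) x]
      exact sub_mem (mem_sup_right (mem_map_of_mem (h.apply_le k hy))) (mem_sup_left hr)
    have hmap : W.map (N ^ (k + 1)) ≤ W.map (N ^ k) := by
      rw [pow_succ, Module.End.mul_eq_comp, map_comp]
      exact map_mono h.map_upper_le
    calc Fil (-k) ≤ Fil (-k - 1) ⊔ W.map (N ^ k) := hstep
      _ ≤ Fil (-(k + 1 : ℕ) - i) ⊔ W.map (N ^ (k + 1)) ⊔ W.map (N ^ k) := by
        gcongr
        simpa [sub_eq_add_neg, add_comm] using ih (k + 1)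
      _ ≤ Fil (-k - (i + 1 : ℕ)) ⊔ W.map (N ^ k) := by
        refine sup_le (sup_le le_sup_left (hmap.trans le_sup_right)) le_sup_right |>.trans ?_
        rw [show -((k + 1 : ℕ) : ℤ) - i = -k - (i + 1 : ℕ) by push_cast; ring]

theorem apply_eq_upper (h : IsMonodromyFiltration N U W Fil) {n : ℕ}
    (hn : W.map (N ^ (n + 1)) ≤ U) {j : ℤ} (hj : n ≤ j) : Fil j = W :=
  le_antisymm (h.apply_le j) fun x hx =>
    h.monotone (by omega) (h.mem_of_pow_mem_lower (n + 1) hx (hn (mem_map_of_mem hx)))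

theorem apply_eq_lower (h : IsMonodromyFiltration N U W Fil) {n : ℕ}
    (hn : W.map (N ^ (n + 1)) ≤ U) {j : ℤ} (hj : j ≤ -n - 1) : Fil j = U := by
  refine le_antisymm ?_ (h.le_apply j)
  calc Fil j ≤ Fil (-(n + 1 : ℕ)) := h.monotone (by omega)
    _ ≤ U ⊔ W.map (N ^ (n + 1)) := h.apply_neg_le_sup_map_pow (n + 1)
    _ = U := sup_eq_left.mpr hn

theorem apply_eq_inf_comap (h : IsMonodromyFiltration N U W Fil) {n : ℕ}
    (hn : W.map (N ^ (n + 2)) ≤ U) : Fil n = W ⊓ U.comap (N ^ (n + 1)) := by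
  apply le_antisymm
  · intro x hx
    refine mem_inf.mpr ⟨h.apply_le n hx, ?_⟩
    rw [mem_comap, ← h.apply_eq_lower hn (j := n - 2 * (n + 1 : ℕ)) (by omega)]
    exact h.pow_mem (n + 1) hx
  · rintro x ⟨hxW, hxU⟩
    simpa using h.mem_of_pow_mem_lower (n + 1) hxW hxU

theorem apply_neg_eq_sup_map (h : IsMonodromyFiltration N U W Fil) {n : ℕ}
    (hn : W.map (N ^ (n + 2)) ≤ U) : Fil (-n - 1) = U ⊔ W.map (N ^ (n + 1)) := by
  refine le_antisymm ?_ (sup_le (h.le_apply _) ?_)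
  · simpa [sub_eq_add_neg, add_comm] using h.apply_neg_le_sup_map_pow (n + 1)
  rintro _ ⟨x, hx, rfl⟩
  rw [← h.apply_eq_upper hn (j := (n + 1 : ℕ)) le_rfl] at hx
  simpa [sub_eq_add_neg, add_comm] using h.pow_mem_neg (n + 1) hx

theorem clamp (h : IsMonodromyFiltration N U W Fil) (m : ℕ) :
    IsMonodromyFiltration N (Fil (-m - 1)) (Fil m) (fun j => Fil (max (-m - 1) (min j m))) where
  monotone i j hij := h.monotone (max_le_max le_rfl (min_le_min_right _ hij))
  exists_eq_lower := ⟨-m - 1, fun j hj => by congr 1; omega⟩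
  exists_eq_upper := ⟨m, fun j hj => by congr 1; omega⟩
  map_mem j x hx := h.monotone (by omega) (h.map_mem _ x hx)
  exists_pow_sub_mem k x hx := by
    by_cases hk : k ≤ m
    · simp only [show max (-m - 1 : ℤ) (min (-k) m) = -k by omega,
        show max (-m - 1 : ℤ) (min k m) = k by omega,
        show max (-m - 1 : ℤ) (min (-k - 1) m) = -k - 1 by omega] at hx ⊢
      exact h.exists_pow_sub_mem k x hx
    · refine ⟨0, zero_mem _, ?_⟩
      simp only [show max (-m - 1 : ℤ) (min (-k) m) = -m - 1 by omega,
        show max (-m - 1 : ℤ) (min (-k - 1) m) = -m - 1 by omega] at hx ⊢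
      simpa using hx
  mem_of_pow_mem k y hy hNy := by
    by_cases hk : k ≤ m
    · simp only [show max (-m - 1 : ℤ) (min k m) = k by omega,
        show max (-m - 1 : ℤ) (min (k - 1) m) = k - 1 by omega,
        show max (-m - 1 : ℤ) (min (-k - 1) m) = -k - 1 by omega] at hy hNy ⊢
      exact h.mem_of_pow_mem k y hy hNy
    · simpa [show max (-m - 1 : ℤ) (min (k - 1) m) = m by omega,
        show max (-m - 1 : ℤ) (min k m) = m by omega] using hy

theorem eq_of_map_pow_le {Fil' : ℤ → Submodule R V} {n : ℕ}
    (h : IsMonodromyFiltration N U W Fil) (hn : W.map (N ^ (n + 1)) ≤ U)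
    (h' : IsMonodromyFiltration N U W Fil') : Fil = Fil' := by
  induction n generalizing U W Fil Fil' with
  | zero =>
    funext j
    rcases le_or_gt 0 j with hj | hj
    · rw [h.apply_eq_upper hn (by omega), h'.apply_eq_upper hn (by omega)]
    · rw [h.apply_eq_lower hn (by omega), h'.apply_eq_lower hn (by omega)]
  | succ n ih =>
    have hc' := h'.clamp n
    rw [h'.apply_neg_eq_sup_map hn, ← h.apply_neg_eq_sup_map hn, h'.apply_eq_inf_comap hn,
      ← h.apply_eq_inf_comap hn] at hc'
    have hmap : (Fil n).map (N ^ (n + 1)) ≤ Fil (-n - 1) := by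
      rintro _ ⟨x, hx, rfl⟩
      exact h.monotone (by omega) (h.pow_mem (n + 1) hx)
    have hclamp := ih (h.clamp n) hmap hc'
    funext j
    by_cases hup : (n + 1 : ℕ) ≤ j
    · rw [h.apply_eq_upper hn hup, h'.apply_eq_upper hn hup]
    by_cases hlow : j ≤ -(n + 1 : ℕ) - 1
    · rw [h.apply_eq_lower hn hlow, h'.apply_eq_lower hn hlow]
    simpa [show max (-n - 1 : ℤ) (min j n) = j by omega] using congrFun hclamp j

end IsMonodromyFiltration

def extendFiltration (U W : Submodule R V) (G : ℤ → Submodule R V) (n : ℕ) (j : ℤ) :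
    Submodule R V :=
  if j ≤ -n - 2 then U else if j ≤ n then G j else W

section extendFiltration

variable {U W : Submodule R V} {G : ℤ → Submodule R V} {n : ℕ} {j : ℤ}

theorem extendFiltration_of_le (hj : j ≤ -n - 2) : extendFiltration U W G n j = U :=
  if_pos hj

theorem extendFiltration_of_mem (h₁ : -n - 1 ≤ j) (h₂ : j ≤ n) :
    extendFiltration U W G n j = G j := by
  rw [extendFiltration, if_neg (by omega), if_pos h₂]

theorem extendFiltration_of_lt (hj : n < j) : extendFiltration U W G n j = W := by
  rw [extendFiltration, if_neg (by omega), if_neg (by omega)]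

theorem monotone_extendFiltration (hG : Monotone G) (hUG : ∀ j, U ≤ G j)
    (hGW : ∀ j, G j ≤ W) : Monotone (extendFiltration U W G n) := by
  intro i j hij
  rcases le_or_gt i (-n - 2) with hi | hi
  · rw [extendFiltration_of_le hi, extendFiltration]
    split_ifs
    exacts [le_rfl, hUG j, (hUG 0).trans (hGW 0)]
  rcases le_or_gt j n with hj | hj
  · rw [extendFiltration_of_mem (by omega) (by omega), extendFiltration_of_mem (by omega) hj]
    exact hG hij
  · rw [extendFiltration_of_lt hj, extendFiltration, if_neg (by omega)]
    split_ifs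
    exacts [hGW i, le_rfl]

end extendFiltration

namespace IsMonodromyFiltration

variable {N : Module.End R V} {U W : Submodule R V} {G : ℤ → Submodule R V} {n : ℕ}

theorem of_map_le (hUW : U ≤ W) (hN : W.map N ≤ U) :
    IsMonodromyFiltration N U W (fun j => if j < 0 then U else W) where
  monotone i j hij := by
    dsimp only
    split_ifs <;> first | exact le_rfl | exact hUW | omega
  exists_eq_lower := ⟨-1, fun j hj => if_pos (by omega)⟩
  exists_eq_upper := ⟨0, fun j hj => if_neg (by omega)⟩
  map_mem j x hx := by
    have hNx : N x ∈ U := by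
      split_ifs at hx
      exacts [hN (mem_map_of_mem (hUW hx)), hN (mem_map_of_mem hx)]
    split_ifs
    exacts [hNx, hUW hNx]
  exists_pow_sub_mem k x hx := by
    rcases k with _ | k
    · exact ⟨x, by simpa using hx, by simp⟩
    · refine ⟨0, zero_mem _, ?_⟩
      simp only [if_pos (by omega : -((k + 1 : ℕ) : ℤ) < 0),
        if_pos (by omega : -((k + 1 : ℕ) : ℤ) - 1 < 0)] at hx ⊢
      simpa using hx
  mem_of_pow_mem k y hy hNy := by
    rcases k with _ | k
    · simpa using hNy
    · simp only [if_neg (by omega : ¬((k + 1 : ℕ) : ℤ) < 0),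
        if_neg (by omega : ¬((k + 1 : ℕ) : ℤ) - 1 < 0)] at hy ⊢
      exact hy

theorem map_mem_extendFiltration
    (hG : IsMonodromyFiltration N (U ⊔ W.map (N ^ (n + 1))) (W ⊓ U.comap (N ^ (n + 1))) G)
    (hU : U.map N ≤ U) (hW : W.map N ≤ W) (hn : W.map (N ^ (n + 2)) ≤ U) (j : ℤ) (x : V)
    (hx : x ∈ extendFiltration U W G n j) : N x ∈ extendFiltration U W G n (j - 2) := by
  rcases lt_or_ge j (-n - 1) with hj₁ | hj₁
  · rw [extendFiltration_of_le (by omega)] at hx ⊢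
    exact hU (mem_map_of_mem hx)
  rcases le_or_gt j (-n) with hj₂ | hj₂
  · rw [extendFiltration_of_mem hj₁ (by omega)] at hx
    rw [extendFiltration_of_le (by omega)]
    have hNG : (G (-n)).map N ≤ U := by
      refine (map_mono (hG.apply_neg_le_sup_map_pow n)).trans ?_
      rw [Submodule.map_sup, ← map_comp, ← Module.End.mul_eq_comp, ← pow_succ']
      exact sup_le (map_sup_map_pow_le hU hn) ((map_mono inf_le_right).trans (map_comap_le _ _))
    exact hNG (mem_map_of_mem (hG.monotone hj₂ hx))
  rcases le_or_gt j n with hj₃ | hj₃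
  · rw [extendFiltration_of_mem hj₁ (by omega)] at hx
    rw [extendFiltration_of_mem (by omega) (by omega)]
    exact hG.map_mem j x hx
  rw [extendFiltration_of_lt hj₃] at hx
  rcases le_or_gt j (n + 2) with hj₄ | hj₄
  · rw [extendFiltration_of_mem (by omega) (by omega)]
    have hNnx : (N ^ n) (N x) ∈ U ⊔ W.map (N ^ (n + 1)) := by
      rw [← Module.End.mul_apply, ← pow_succ]
      exact mem_sup_right (mem_map_of_mem hx)
    refine hG.monotone (by omega) (hG.mem_of_pow_mem_lower n ?_ hNnx)
    exact map_le_inf_comap_pow hW hn (mem_map_of_mem hx)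
  · rw [extendFiltration_of_lt (by omega)]
    exact hW (mem_map_of_mem hx)

theorem extend
    (hG : IsMonodromyFiltration N (U ⊔ W.map (N ^ (n + 1))) (W ⊓ U.comap (N ^ (n + 1))) G)
    (hU : U.map N ≤ U) (hW : W.map N ≤ W) (hn : W.map (N ^ (n + 2)) ≤ U) :
    IsMonodromyFiltration N U W (extendFiltration U W G n) where
  monotone := monotone_extendFiltration hG.monotone
    (fun j => le_sup_left.trans (hG.le_apply j)) (fun j => (hG.apply_le j).trans inf_le_left)
  exists_eq_lower := ⟨-n - 2, fun _ hj => extendFiltration_of_le hj⟩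
  exists_eq_upper := ⟨n + 1, fun _ hj => extendFiltration_of_lt (by omega)⟩
  map_mem := hG.map_mem_extendFiltration hU hW hn
  exists_pow_sub_mem k x hx := by
    by_cases hk : k ≤ n
    · rw [extendFiltration_of_mem (by omega) (by omega)] at hx
      rw [extendFiltration_of_mem (by omega) (by omega),
        extendFiltration_of_mem (by omega) (by omega)]
      exact hG.exists_pow_sub_mem k x hx
    have hx' : x ∈ U ⊔ W.map (N ^ k) := by
      by_cases hk' : k = n + 1
      · subst hk'
        rwa [extendFiltration_of_mem (by omega) (by omega),
          hG.apply_eq_lower map_pow_inf_comap_pow_le (by omega)] at hx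
      · rw [extendFiltration_of_le (by omega)] at hx
        exact mem_sup_left hx
    obtain ⟨u, hu, _, ⟨y, hy, rfl⟩, rfl⟩ := mem_sup.mp hx'
    refine ⟨y, by rwa [extendFiltration_of_lt (by omega)], ?_⟩
    rw [extendFiltration_of_le (by omega), sub_add_cancel_right]
    exact neg_mem hu
  mem_of_pow_mem k y hy hNy := by
    by_cases hk : k ≤ n
    · rw [extendFiltration_of_mem (by omega) (by omega)] at hy hNy ⊢
      exact hG.mem_of_pow_mem k y hy hNy
    rw [extendFiltration_of_lt (by omega)] at hy
    by_cases hk' : k = n + 1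
    · subst hk'
      rw [extendFiltration_of_le (by omega)] at hNy
      rw [extendFiltration_of_mem (by omega) (by omega)]
      simpa using hG.mem_of_pow_mem_lower (n + 1) ⟨hy, hNy⟩ (mem_sup_left hNy)
    · rwa [extendFiltration_of_lt (by omega)]

theorem exists_of_map_pow_le (hU : U.map N ≤ U) (hW : W.map N ≤ W) (hUW : U ≤ W)
    (hn : W.map (N ^ (n + 1)) ≤ U) : ∃ Fil, IsMonodromyFiltration N U W Fil := by
  induction n generalizing U W with
  | zero => exact ⟨_, of_map_le hUW (by simpa using hn)⟩
  | succ n ih =>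
    obtain ⟨G, hG⟩ := ih ((map_sup_map_pow_le hU hn).trans le_sup_left)
      ((map_mono inf_le_left).trans (map_le_inf_comap_pow hW hn))
      (sup_map_pow_le_inf_comap_pow hU hW hUW hn) map_pow_inf_comap_pow_le
    exact ⟨_, hG.extend hU hW hn⟩

end IsMonodromyFiltration

end

theorem stmt0_general {K V : Type*} [Field K] [AddCommGroup V] [Module K V]
    (N : Module.End K V) (hN : IsNilpotent N) :
    ∃! Fil : ℤ → Submodule K V,
      Monotone Fil ∧
      (∃ a : ℤ, ∀ j ≤ a, Fil j = ⊥) ∧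
      (∃ b : ℤ, ∀ j : ℤ, b ≤ j → Fil j = ⊤) ∧
      (∀ j : ℤ, ∀ x ∈ Fil j, N x ∈ Fil (j - 2)) ∧
      (∀ k : ℕ,
        (∀ y ∈ Fil (k : ℤ), (N ^ k) y ∈ Fil (-(k : ℤ))) ∧
        (∀ x ∈ Fil (-(k : ℤ)), ∃ y ∈ Fil (k : ℤ),
          (N ^ k) y - x ∈ Fil (-(k : ℤ) - 1)) ∧
        (∀ y ∈ Fil (k : ℤ), (N ^ k) y ∈ Fil (-(k : ℤ) - 1) → y ∈ Fil ((k : ℤ) - 1))) := by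
  obtain ⟨n, hn⟩ := hN
  have hnil : (⊤ : Submodule K V).map (N ^ (n + 1)) ≤ ⊥ := by simp [pow_succ, hn]
  obtain ⟨Fil, hFil⟩ :=
    IsMonodromyFiltration.exists_of_map_pow_le (by simp) le_top bot_le hnil
  refine ⟨Fil, ⟨hFil.monotone, hFil.exists_eq_lower, hFil.exists_eq_upper, hFil.map_mem,
    fun k => ⟨fun y hy => hFil.pow_mem_neg k hy, hFil.exists_pow_sub_mem k,
      hFil.mem_of_pow_mem k⟩⟩, ?_⟩
  rintro Fil' ⟨hmono, hlow, hup, hshift, hk⟩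
  exact (hFil.eq_of_map_pow_le hnil
    ⟨hmono, hlow, hup, hshift, fun k => (hk k).2.1, fun k => (hk k).2.2⟩).symm

/-- Existence and uniqueness of the monodromy filtration of a nilpotent
endomorphism of a finite-dimensional vector space. -/
theorem stmt0 {K V : Type*} [Field K] [AddCommGroup V] [Module K V]
    [FiniteDimensional K V] (N : Module.End K V) (hN : IsNilpotent N) :
    ∃! Fil : ℤ → Submodule K V,
      Monotone Fil ∧
      (∃ a : ℤ, ∀ j ≤ a, Fil j = ⊥) ∧
      (∃ b : ℤ, ∀ j : ℤ, b ≤ j → Fil j = ⊤) ∧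
      (∀ j : ℤ, ∀ x ∈ Fil j, N x ∈ Fil (j - 2)) ∧
      (∀ k : ℕ,
        (∀ y ∈ Fil (k : ℤ), (N ^ k) y ∈ Fil (-(k : ℤ))) ∧
        (∀ x ∈ Fil (-(k : ℤ)), ∃ y ∈ Fil (k : ℤ),
          (N ^ k) y - x ∈ Fil (-(k : ℤ) - 1)) ∧
        (∀ y ∈ Fil (k : ℤ), (N ^ k) y ∈ Fil (-(k : ℤ) - 1) → y ∈ Fil ((k : ℤ) - 1))) :=
  stmt0_general N hN
end

section
/- Let V be a vector space over a field F, let Φ : V → V be an invertible linear map, let N : V → V be linear, and let q ∈ F be nonzero, such that N ∘ Φ = q • (Φ ∘ N). Then for every λ ∈ F, N maps the generalized eigenspace of Φ for eigenvalue λ into the generalized eigenspace of Φ for eigenvalue λ/q. (Concretely: if (Φ - λ)^k v = 0 then (Φ - λ/q)^k (N v) = 0.) -/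
/-!
From `N Φ = q Φ N` one gets `N (Φ - λ) = (q Φ - λ) N`, hence `N (Φ - λ)^k = (q Φ - λ)^k N`,
so `N` carries `ker (Φ - λ)^k` into `ker (q Φ - λ)^k = ker (Φ - λ/q)^k`.
-/

theorem semiconjBy_sub_smul_one_of_mul_eq_smul_mul {R A : Type*} [CommRing R] [Ring A]
    [Algebra R A] {Φ N : A} {q : R} (h : N * Φ = q • (Φ * N)) (lam : R) :
    SemiconjBy N (Φ - lam • 1) (q • Φ - lam • 1) := by
  rw [SemiconjBy, mul_sub, sub_mul, h, smul_mul_assoc, mul_smul_one, smul_one_mul]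

theorem smul_sub_smul_one_eq_smul_sub_div {K A : Type*} [Field K] [Ring A] [Algebra K A]
    (Φ : A) {q : K} (hq : q ≠ 0) (lam : K) :
    q • Φ - lam • 1 = q • (Φ - (lam / q) • 1) := by
  rw [smul_sub, smul_smul, mul_div_cancel₀ lam hq]

theorem stmt2_general {F V : Type*} [Field F] [AddCommGroup V] [Module F V]
    (Φ N : Module.End F V)
    (q : F) (hq : q ≠ 0) (h : N * Φ = q • (Φ * N)) :
    ∀ (lam : F) (k : ℕ) (v : V),
      ((Φ - lam • (1 : Module.End F V)) ^ k) v = 0 →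
      ((Φ - (lam / q) • (1 : Module.End F V)) ^ k) (N v) = 0 := by
  intro lam k v hv
  have hsemi := (semiconjBy_sub_smul_one_of_mul_eq_smul_mul h lam).pow_right k
  have hNv : ((q • Φ - lam • 1) ^ k) (N v) = 0 := by
    rw [← Module.End.mul_apply, ← hsemi.eq, Module.End.mul_apply, hv, map_zero]
  rwa [smul_sub_smul_one_eq_smul_sub_div Φ hq, smul_pow, LinearMap.smul_apply,
    smul_eq_zero, or_iff_right (pow_ne_zero k hq)] at hNv

/-- If `NΦ = q·ΦN` then `N` maps the generalized eigenspace of `Φ` for `λ` into the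
generalized eigenspace for `λ/q`. -/
theorem stmt2 {F V : Type*} [Field F] [AddCommGroup V] [Module F V]
    (Φ N : Module.End F V) (hΦ : Function.Bijective Φ)
    (q : F) (hq : q ≠ 0) (h : N * Φ = q • (Φ * N)) :
    ∀ (lam : F) (k : ℕ) (v : V),
      ((Φ - lam • (1 : Module.End F V)) ^ k) v = 0 →
      ((Φ - (lam / q) • (1 : Module.End F V)) ^ k) (N v) = 0 :=
  stmt2_general Φ N q hq h
end

section
/- Let R be a commutative ring, ϖ ∈ R a nonzerodivisor, and M an R-module with no ϖ-torsion (i.e. ϖ·x = 0 implies x = 0). Then the ϖ-adic completion of M, namely lim_n M/ϖⁿM, also has no ϖ-torsion. -/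
/-! If `ϖ • x = 0` in the completion, then each component `xₙ₊₁ = [m]` in `M/ϖⁿ⁺¹M` satisfies
`ϖ • m ∈ ϖⁿ⁺¹M`, so `m ∈ ϖⁿM` by cancelling `ϖ`, and hence `xₙ`, the image of `xₙ₊₁`, vanishes. -/

open Submodule

lemma mem_span_singleton_pow_smul_top_of_smul_mem {R M : Type*} [CommRing R] [AddCommGroup M]
    [Module R M] {r : R} (hr : IsSMulRegular M r) {n : ℕ} {m : M}
    (h : r • m ∈ (Ideal.span {r}) ^ (n + 1) • (⊤ : Submodule R M)) :
    m ∈ (Ideal.span {r}) ^ n • (⊤ : Submodule R M) := by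
  rw [Ideal.span_singleton_pow, ideal_span_singleton_smul] at h ⊢
  obtain ⟨m', -, hm'⟩ := Set.mem_smul_set.mp h
  have hm : r • (r ^ n • m') = r • m := by rw [smul_smul, ← pow_succ', hm']
  exact hr hm ▸ smul_mem_pointwise_smul _ _ _ mem_top

lemma AdicCompletion.isSMulRegular_span_singleton {R M : Type*} [CommRing R] [AddCommGroup M]
    [Module R M] {r : R} (hr : IsSMulRegular M r) :
    IsSMulRegular (AdicCompletion (Ideal.span {r}) M) r := by
  refine isSMulRegular_iff_right_eq_zero_of_smul.mpr fun x hx ↦ ext fun n ↦ ?_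
  obtain ⟨m, hm⟩ := Submodule.Quotient.mk_surjective _ (x.val (n + 1))
  have hrm : r • m ∈ Ideal.span {r} ^ (n + 1) • (⊤ : Submodule R M) := by
    rw [← Submodule.Quotient.mk_eq_zero, Submodule.Quotient.mk_smul, hm, ← val_smul_apply, hx,
      val_zero_apply]
  rw [← x.property n.le_succ, ← hm, val_zero_apply, mapQ_apply, LinearMap.id_apply,
    Submodule.Quotient.mk_eq_zero]
  exact mem_span_singleton_pow_smul_top_of_smul_mem hr hrm

theorem stmt5_general {R : Type*} [CommRing R] {M : Type*} [AddCommGroup M] [Module R M]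
    (ϖ : R)
    (hM : ∀ m : M, ϖ • m = 0 → m = 0) :
    ∀ x : AdicCompletion (Ideal.span {ϖ}) M, ϖ • x = 0 → x = 0 :=
  isSMulRegular_iff_right_eq_zero_of_smul.mp <|
    AdicCompletion.isSMulRegular_span_singleton (isSMulRegular_iff_right_eq_zero_of_smul.mpr hM)

/-- The ϖ-adic completion of a module with no ϖ-torsion has no ϖ-torsion. -/
theorem stmt5 {R : Type*} [CommRing R] {M : Type*} [AddCommGroup M] [Module R M]
    (ϖ : R) (hϖ : ϖ ∈ nonZeroDivisors R)
    (hM : ∀ m : M, ϖ • m = 0 → m = 0) :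
    ∀ x : AdicCompletion (Ideal.span {ϖ}) M, ϖ • x = 0 → x = 0 :=
  stmt5_general ϖ hM
end

section
/- Let A and B be abelian groups, p a prime, k a positive integer, and f : A → B, g : B → A group homomorphisms with g ∘ f = (multiplication by p^k on A) and f ∘ g = (multiplication by p^k on B). Then the inverse limits lim(⋯ → A →^{×p} A →^{×p} A) and lim(⋯ → B →^{×p} B →^{×p} B) of the towers with transition map multiplication by p are isomorphic as abelian groups. -/
/-!
Multiplication by `p` is invertible on the inverse limit of the tower `(A, ×p)`: its inverse
shifts a compatible sequence one step. Hence so is multiplication by `p ^ k`, and since the maps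
induced by `f` and `g` compose to it in both orders, the map induced by `f` is bijective.
-/

/-- The inverse limit of the tower `⋯ → A →^{×p} A →^{×p} A`. -/
def limTower (p : ℕ) (A : Type*) [AddCommGroup A] : AddSubgroup (ℕ → A) where
  carrier := {s | ∀ n, p • s (n + 1) = s n}
  add_mem' := by
    intro a b ha hb n
    show p • (a (n + 1) + b (n + 1)) = a n + b n
    rw [smul_add, ha n, hb n]
  zero_mem' := by intro n; simp
  neg_mem' := by
    intro a ha n
    show p • (-(a (n + 1))) = -(a n)
    rw [smul_neg, ha n]

namespace limTower

variable {p : ℕ} {A B : Type*} [AddCommGroup A] [AddCommGroup B]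

def map (f : A →+ B) : limTower p A →+ limTower p B where
  toFun s := ⟨fun n => f (s.1 n), fun n => by rw [← map_nsmul, s.2 n]⟩
  map_zero' := by ext; simp
  map_add' s t := by ext; simp

def shift : limTower p A →+ limTower p A where
  toFun s := ⟨fun n => s.1 (n + 1), fun n => s.2 (n + 1)⟩
  map_zero' := rfl
  map_add' _ _ := rfl

theorem nsmul_shift (s : limTower p A) : p • shift s = s := by
  ext n
  exact s.2 n

theorem shift_nsmul (s : limTower p A) : shift (p • s) = s := by
  ext n
  exact s.2 n

theorem bijective_nsmul : Function.Bijective (fun s : limTower p A => p • s) :=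
  ⟨Function.LeftInverse.injective shift_nsmul, Function.RightInverse.surjective nsmul_shift⟩

theorem bijective_pow_nsmul (k : ℕ) : Function.Bijective (fun s : limTower p A => p ^ k • s) := by
  induction k with
  | zero => simp only [pow_zero, one_smul]; exact Function.bijective_id
  | succ k ih =>
    have hcomp : (fun s : limTower p A => p ^ (k + 1) • s) = (p ^ k • ·) ∘ (p • ·) := by
      funext s
      simp only [Function.comp_apply, pow_succ, mul_smul]
    rw [hcomp]
    exact ih.comp bijective_nsmul

theorem map_map_of_forall_eq_pow_nsmul {k : ℕ} {f : A →+ B} {g : B →+ A}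
    (hgf : ∀ a : A, g (f a) = p ^ k • a) (s : limTower p A) :
    map g (map f s) = p ^ k • s := by
  ext n
  exact hgf (s.1 n)

theorem bijective_map_of_isogeny {k : ℕ} {f : A →+ B} {g : B →+ A}
    (hgf : ∀ a : A, g (f a) = p ^ k • a) (hfg : ∀ b : B, f (g b) = p ^ k • b) :
    Function.Bijective (map (p := p) f) := by
  have hAB : map g ∘ map f = fun s : limTower p A => p ^ k • s :=
    funext (map_map_of_forall_eq_pow_nsmul hgf)
  have hBA : map f ∘ map g = fun t : limTower p B => p ^ k • t :=
    funext (map_map_of_forall_eq_pow_nsmul hfg)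
  exact ⟨.of_comp (hAB ▸ (bijective_pow_nsmul k).1), .of_comp (hBA ▸ (bijective_pow_nsmul k).2)⟩

end limTower

theorem stmt10_general {A B : Type*} [AddCommGroup A] [AddCommGroup B]
    (p k : ℕ)
    (f : A →+ B) (g : B →+ A)
    (hgf : ∀ a : A, g (f a) = p ^ k • a)
    (hfg : ∀ b : B, f (g b) = p ^ k • b) :
    Nonempty ((limTower p A) ≃+ (limTower p B)) :=
  ⟨AddEquiv.ofBijective (limTower.map f) (limTower.bijective_map_of_isogeny hgf hfg)⟩

/-- p-power isogenous abelian groups have isomorphic inverse limits along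
multiplication by p. -/
theorem stmt10 {A B : Type*} [AddCommGroup A] [AddCommGroup B]
    (p k : ℕ) (hp : p.Prime) (hk : 0 < k)
    (f : A →+ B) (g : B →+ A)
    (hgf : ∀ a : A, g (f a) = p ^ k • a)
    (hfg : ∀ b : B, f (g b) = p ^ k • b) :
    Nonempty ((limTower p A) ≃+ (limTower p B)) :=
  stmt10_general p k f g hgf hfg
end

section
/- Let V be a finite-dimensional vector space over an algebraically closed field F, Φ an invertible linear endomorphism of V, q ∈ F nonzero, and N a linear endomorphism with N∘Φ = q•(Φ∘N). Let w : F^× → ℤ be a function on eigenvalues with w(λ/q) = w(λ) - 2 for all λ, and for m ∈ ℤ define W_m ⊆ V as the sum of the generalized eigenspaces of Φ for all eigenvalues λ with w(λ) ≤ m. Then N(W_m) ⊆ W_{m-2} for all m. -/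
/-! From `N Φ = q Φ N` one gets `N (Φ - qμ) = q (Φ - μ) N`, so `N` carries the generalized
`qμ`-eigenspace of `Φ` into the generalized `μ`-eigenspace; dividing an eigenvalue by `q` lowers
its weight by `2`. -/

section QCommuting

variable {R M : Type*} [CommRing R] [AddCommGroup M] [Module R M] {f N : Module.End R M}

theorem semiconjBy_sub_smul_one_of_mul_eq_smul_mul_s14 {q : R} (h : N * f = q • (f * N)) (μ : R) :
    SemiconjBy N (f - (q * μ) • 1) (q • (f - μ • 1)) := by
  simp only [SemiconjBy, mul_sub, sub_mul, h, mul_smul_comm, smul_mul_assoc, mul_one, one_mul,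
    smul_sub, smul_smul]

theorem map_ker_pow_sub_smul_one_le_of_mul_eq_smul_mul {q : Rˣ} (h : N * f = (q : R) • (f * N))
    (μ : R) (k : ℕ) :
    (LinearMap.ker ((f - ((q : R) * μ) • 1) ^ k)).map N ≤ LinearMap.ker ((f - μ • 1) ^ k) := by
  rintro _ ⟨x, hx, rfl⟩
  have hpow := congrArg (· x) ((semiconjBy_sub_smul_one_of_mul_eq_smul_mul_s14 h μ).pow_right k)
  simp only [Module.End.mul_apply, LinearMap.mem_ker.mp hx, map_zero, smul_pow,
    LinearMap.smul_apply] at hpow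
  rw [← Units.val_pow_eq_pow_val] at hpow
  exact (q ^ k).isUnit.smul_eq_zero.mp hpow.symm

end QCommuting

theorem stmt14_general {F V : Type*} [Field F] [AddCommGroup V] [Module F V]
    (Φ N : Module.End F V) (q : Fˣ)
    (h : N * Φ = (q : F) • (Φ * N))
    (w : Fˣ → ℤ) (hw : ∀ lam : Fˣ, w (lam / q) = w lam - 2)
    (W : ℤ → Submodule F V)
    (hW : ∀ m : ℤ, W m = ⨆ lam : Fˣ, ⨆ _ : w lam ≤ m,
      ⨆ k : ℕ, LinearMap.ker ((Φ - (lam : F) • (1 : Module.End F V)) ^ k)) :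
    ∀ m : ℤ, ∀ x ∈ W m, N x ∈ W (m - 2) := by
  intro m
  change W m ≤ (W (m - 2)).comap N
  rw [hW m, hW (m - 2)]
  refine iSup_le fun lam => iSup_le fun hlam => iSup_le fun k => ?_
  have hweight : w (lam / q) ≤ m - 2 := by rw [hw]; omega
  have hker := map_ker_pow_sub_smul_one_le_of_mul_eq_smul_mul h ((lam / q : Fˣ) : F) k
  rw [← Units.val_mul, mul_div_cancel] at hker
  refine Submodule.map_le_iff_le_comap.mp (hker.trans ?_)
  exact le_iSup₂_of_le (lam / q) hweight (le_iSup_of_le k le_rfl)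

/-- The monodromy operator N shifts the weight filtration (built from generalized
eigenspaces of Φ) down by 2. -/
theorem stmt14 {F V : Type*} [Field F] [IsAlgClosed F] [AddCommGroup V] [Module F V]
    [FiniteDimensional F V]
    (Φ N : Module.End F V) (hΦ : Function.Bijective Φ) (q : Fˣ)
    (h : N * Φ = (q : F) • (Φ * N))
    (w : Fˣ → ℤ) (hw : ∀ lam : Fˣ, w (lam / q) = w lam - 2)
    (W : ℤ → Submodule F V)
    (hW : ∀ m : ℤ, W m = ⨆ lam : Fˣ, ⨆ _ : w lam ≤ m,
      ⨆ k : ℕ, LinearMap.ker ((Φ - (lam : F) • (1 : Module.End F V)) ^ k)) :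
    ∀ m : ℤ, ∀ x ∈ W m, N x ∈ W (m - 2) :=
  stmt14_general Φ N q h w hw W hW
end
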